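/- (Dirichlet's theorem in function fields) For any θ ∈ k_∞ and H ∈ k_∞ with |H| ≥ q, there exists a nonzero polynomial x ∈ K such that ‖xθ‖ ≤ 1/|H| and 1 ≤ |x| < |H|. -/

import Mathlib

open FunctionField Multiplicative WithZero

variable (Fq : Type) [Field Fq] [Fintype Fq] [DecidableEq (RatFunc Fq)]

/-- The embedding of the rational function field into its completion at infinity. -/
noncomputable def embR : RatFunc Fq →+* RatFunc.CompletionAtInfty Fq :=
  letI := RatFunc.inftyValued Fq
  UniformSpace.Completion.coeRingHom

/-- The embedding of the polynomial ring `K = Fq[T]` into `k∞`. -/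
noncomputable def embP : Polynomial Fq →+* RatFunc.CompletionAtInfty Fq :=
  (embR Fq).comp (algebraMap (Polynomial Fq) (RatFunc Fq))

/-- The absolute value `|α| = q^{-v(α)}` on `k∞`. -/
noncomputable def vabs (α : RatFunc.CompletionAtInfty Fq) : ℝ :=
  if h : Valued.v α = (0 : WithZero (Multiplicative ℤ)) then 0
  else (Fintype.card Fq : ℝ) ^ (toAdd (unzero h))

/-- The distance `‖α‖` from `α` to the nearest polynomial. -/
noncomputable def pnorm (α : RatFunc.CompletionAtInfty Fq) : ℝ :=
  ⨅ A : Polynomial Fq, vabs Fq (α - embP Fq A)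

/-!
Approximate `θ` to within `q^{-2m}` by a rational function `N / D` with `D` monic. On the
`m`-dimensional space of polynomials of degree `< m`, the linear map sending `x` to the top
`m - 1` coefficients of `x N mod D` has a nontrivial kernel; for `x ≠ 0` in it and
`A = x N div D`, the fraction `x N / D - A = (x N mod D) / D` has absolute value `≤ q^{-m}`,
and so does `x (θ - N / D)`. By the ultrametric inequality `‖x θ‖ ≤ |x θ - A| ≤ q^{-m} = |H|⁻¹`.
-/
section

open Polynomial

variable {K : Type*} [Field K]

theorem Polynomial.exists_natDegree_le_mul_modByMonic_natDegree_add_lt (P Q : K[X])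
    (hQ : Q.Monic) (n : ℕ) : ∃ x : K[X], x ≠ 0 ∧ x.natDegree ≤ n ∧
      ((x * P) %ₘ Q = 0 ∨ ((x * P) %ₘ Q).natDegree + n < Q.natDegree) := by
  let topCoeffs : K[X] →ₗ[K] Fin n → K := LinearMap.pi fun i =>
    (lcoeff K (Q.natDegree - 1 - i)).comp ((modByMonicHom Q).comp (LinearMap.mulRight K P))
  let e := degreeLTEquiv K (n + 1)
  -- `n + 1` free coefficients of `x` against `n` linear conditions
  obtain ⟨w, hw, hw0⟩ := (Submodule.ne_bot_iff _).mp <| LinearMap.ker_ne_bot_of_finrank_lt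
    (f := topCoeffs ∘ₗ (degreeLT K (n + 1)).subtype ∘ₗ e.symm.toLinearMap) (by simp)
  set x : K[X] := (e.symm w : K[X])
  have hx0 : x ≠ 0 := fun h => hw0 (e.symm.map_eq_zero_iff.mp (Subtype.ext h))
  have hxdeg : x.degree < ↑(n + 1) := mem_degreeLT.mp (e.symm w).2
  refine ⟨x, hx0, Nat.lt_succ_iff.mp ((natDegree_lt_iff_degree_lt hx0).mpr hxdeg), ?_⟩
  set R := (x * P) %ₘ Q
  have hR : ∀ j, Q.natDegree < j + n + 1 → R.coeff j = 0 := by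
    intro j hj
    by_cases hjQ : j < Q.natDegree
    · have := congrFun (LinearMap.mem_ker.mp hw) ⟨Q.natDegree - 1 - j, by omega⟩
      simpa [topCoeffs, show Q.natDegree - 1 - (Q.natDegree - 1 - j) = j by omega] using this
    · refine coeff_eq_zero_of_degree_lt ((degree_modByMonic_lt _ hQ).trans_le ?_)
      rw [degree_eq_natDegree hQ.ne_zero]
      exact_mod_cast not_lt.mp hjQ
  by_contra! h
  exact h.1 (leadingCoeff_eq_zero.mp (hR _ (by omega)))

theorem RatFunc.algebraMap_div_sub_divByMonic (p : K[X]) {q : K[X]} (hq : q.Monic) :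
    algebraMap K[X] (RatFunc K) p / algebraMap K[X] (RatFunc K) q
      - algebraMap K[X] (RatFunc K) (p /ₘ q)
      = algebraMap K[X] (RatFunc K) (p %ₘ q) / algebraMap K[X] (RatFunc K) q := by
  have hq0 : algebraMap K[X] (RatFunc K) q ≠ 0 := RatFunc.algebraMap_ne_zero hq.ne_zero
  have h := congrArg (algebraMap K[X] (RatFunc K)) (modByMonic_add_div p q)
  rw [map_add, map_mul] at h
  rw [eq_div_iff hq0, sub_mul, div_mul_cancel₀ _ hq0]
  linear_combination -h

end

section

variable {F : Type} [Field F] [DecidableEq (RatFunc F)]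

theorem valued_embR (g : RatFunc F) : Valued.v (embR F g) = RatFunc.inftyValuation F g :=
  @Valued.valuedCompletion_apply _ _ _ _ (RatFunc.inftyValued F) g

theorem valued_embP {p : Polynomial F} (hp : p ≠ 0) :
    Valued.v (embP F p) = exp (p.natDegree : ℤ) :=
  (valued_embR _).trans (RatFunc.inftyValuation.polynomial F hp)

theorem RatFunc.inftyValuation_algebraMap_div_le {R D : Polynomial F} {k : ℤ} (hD : D ≠ 0)
    (h : R = 0 ∨ R.natDegree + k ≤ D.natDegree) :
    RatFunc.inftyValuation F (algebraMap _ _ R / algebraMap _ _ D) ≤ exp (-k) := by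
  rcases eq_or_ne R 0 with rfl | hR
  · simp
  rw [map_div₀, RatFunc.inftyValuation_apply, RatFunc.inftyValuation_apply,
    RatFunc.inftyValuation.polynomial F hR, RatFunc.inftyValuation.polynomial F hD,
    ← exp_sub, exp_le_exp]
  have := h.resolve_left hR
  omega

theorem exists_valued_sub_embR_lt (θ : RatFunc.CompletionAtInfty F) (k : ℤ) :
    ∃ f : RatFunc F, Valued.v (θ - embR F f) < exp k := by
  let := RatFunc.inftyValued F
  have hXk : Valued.v (embR F (RatFunc.X ^ k)) = exp k := by
    rw [valued_embR, RatFunc.inftyValuation.X_zpow]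
  have hne : Valued.v.restrict (embR F (RatFunc.X ^ k)) ≠ 0 :=
    (Valuation.ne_zero_iff _).mpr fun h => exp_ne_zero (by rw [← hXk, h, map_zero])
  have hball : {y | Valued.v (θ - y) < exp k} ∈ nhds θ := by
    refine Valued.mem_nhds.mpr ⟨Units.mk0 _ hne, fun y hy => ?_⟩
    rw [Set.mem_ofPred_eq, Units.val_mk0, Valuation.restrict_lt_iff, hXk] at hy
    rwa [Set.mem_ofPred_eq, Valuation.map_sub_swap]
  obtain ⟨_, hy, f, rfl⟩ :=
    mem_closure_iff_nhds.mp (UniformSpace.Completion.denseRange_coe θ) _ hball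
  exact ⟨f, hy⟩

theorem exists_valued_embP_mul_sub_embP_le (θ : RatFunc.CompletionAtInfty F) (n : ℕ) :
    ∃ x A : Polynomial F, x ≠ 0 ∧ x.natDegree ≤ n ∧
      Valued.v (embP F x * θ - embP F A) ≤ exp (-(n + 1 : ℤ)) := by
  obtain ⟨f, hf⟩ := exists_valued_sub_embR_lt θ (-(2 * n + 1 : ℤ))
  obtain ⟨x, hx0, hxdeg, hrem⟩ :=
    Polynomial.exists_natDegree_le_mul_modByMonic_natDegree_add_lt f.num f.denom f.monic_denom n
  refine ⟨x, x * f.num /ₘ f.denom, hx0, hxdeg, ?_⟩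
  let ι := algebraMap (Polynomial F) (RatFunc F)
  have hsplit : embP F x * θ - embP F (x * f.num /ₘ f.denom) = embP F x * (θ - embR F f) +
      embR F (ι (x * f.num) / ι f.denom - ι (x * f.num /ₘ f.denom)) := by
    have : ι (x * f.num) / ι f.denom = ι x * f := by
      rw [map_mul, mul_div_assoc, RatFunc.num_div_denom]
    rw [this, map_sub, map_mul]
    simp only [embP, RingHom.comp_apply]
    ring
  rw [hsplit]
  refine (Valuation.map_add _ _ _).trans (max_le ?_ ?_)
  · calc Valued.v (embP F x * (θ - embR F f))
        ≤ exp (x.natDegree : ℤ) * exp (-(2 * n + 1 : ℤ)) := by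
          rw [Valuation.map_mul, valued_embP hx0]
          exact mul_le_mul_right hf.le _
      _ ≤ exp (-(n + 1 : ℤ)) := by
          rw [← exp_add, exp_le_exp]
          omega
  · rw [RatFunc.algebraMap_div_sub_divByMonic _ f.monic_denom, valued_embR]
    exact RatFunc.inftyValuation_algebraMap_div_le f.denom_ne_zero
      (hrem.imp_right fun h => by omega)

end

section

variable {Fq}

theorem vabs_nonneg (α : RatFunc.CompletionAtInfty Fq) : 0 ≤ vabs Fq α := by
  unfold vabs
  split <;> positivity

theorem vabs_of_valued_ne_zero {α : RatFunc.CompletionAtInfty Fq} (h : Valued.v α ≠ 0) :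
    vabs Fq α = (Fintype.card Fq : ℝ) ^ log (Valued.v α) := by
  rw [vabs, dif_neg h, toAdd_unzero_eq_log]

theorem vabs_le_zpow_of_valued_le {α : RatFunc.CompletionAtInfty Fq} {k : ℤ}
    (h : Valued.v α ≤ exp k) : vabs Fq α ≤ (Fintype.card Fq : ℝ) ^ k := by
  by_cases h0 : Valued.v α = 0
  · rw [vabs, dif_pos h0]
    positivity
  · rw [vabs_of_valued_ne_zero h0]
    exact zpow_le_zpow_right₀ (Nat.one_lt_cast.mpr Fintype.one_lt_card).le
      ((log_le_iff_le_exp h0).mpr h)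

theorem pnorm_le_vabs_sub (α : RatFunc.CompletionAtInfty Fq) (A : Polynomial Fq) :
    pnorm Fq α ≤ vabs Fq (α - embP Fq A) := by
  refine ciInf_le ⟨0, ?_⟩ A
  rintro _ ⟨B, rfl⟩
  exact vabs_nonneg _

end

theorem stmt6 (θ H : RatFunc.CompletionAtInfty Fq) (hH : (Fintype.card Fq : ℝ) ≤ vabs Fq H) :
    ∃ x : Polynomial Fq, x ≠ 0 ∧ pnorm Fq (embP Fq x * θ) ≤ (vabs Fq H)⁻¹ ∧
      1 ≤ vabs Fq (embP Fq x) ∧ vabs Fq (embP Fq x) < vabs Fq H := by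
  have hq : 1 < (Fintype.card Fq : ℝ) := Nat.one_lt_cast.mpr Fintype.one_lt_card
  have hH0 : Valued.v H ≠ 0 := fun h => by
    rw [vabs, dif_pos h] at hH
    linarith
  set m := log (Valued.v H)
  have hvH : vabs Fq H = (Fintype.card Fq : ℝ) ^ m := vabs_of_valued_ne_zero hH0
  have hm : 1 ≤ m := (zpow_le_zpow_iff_right₀ hq).mp (by rwa [zpow_one, ← hvH])
  obtain ⟨x, A, hx0, hxdeg, hxA⟩ := exists_valued_embP_mul_sub_embP_le θ (m - 1).toNat
  have hvx : vabs Fq (embP Fq x) = (Fintype.card Fq : ℝ) ^ (x.natDegree : ℤ) := by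
    rw [vabs_of_valued_ne_zero (by simp [valued_embP hx0]), valued_embP hx0, log_exp]
  refine ⟨x, hx0, ?_, ?_, ?_⟩
  · calc pnorm Fq (embP Fq x * θ)
        ≤ vabs Fq (embP Fq x * θ - embP Fq A) := pnorm_le_vabs_sub _ _
      _ ≤ (Fintype.card Fq : ℝ) ^ (-m) := vabs_le_zpow_of_valued_le (by rwa [show
          ((m - 1).toNat + 1 : ℤ) = m by omega] at hxA)
      _ = (vabs Fq H)⁻¹ := by rw [hvH, zpow_neg]
  · rw [hvx]
    exact one_le_zpow₀ hq.le (by positivity)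
  · rw [hvx, hvH]
    exact zpow_lt_zpow_right₀ hq (by omega)
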